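/- Fix a trading fee f ∈ [0,1). Then for every p > 0: (i) profit(p) ≥ 0; in fact profit(p) = (1/2)(√p − 1/√(1−f))² for p ≥ 1/(1−f) and profit(p) = (1/2)(√(p/(1−f)) − 1)² for p ≤ 1−f; and (ii) the price remaining after the maximal arbitrage trade admits no further profitable arbitrage: profit(pArb(p)) = 0. -/

import Mathlib

open Real

noncomputable def profitF (f p : ℝ) : ℝ :=
  if p > 1 / (1 - f) then
    p / 2 - Real.sqrt p / Real.sqrt (1 - f) + 1 / (2 * (1 - f))
  else if p < 1 - f then
    p / (2 * (1 - f)) - Real.sqrt p / Real.sqrt (1 - f) + 1 / 2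
  else 0

noncomputable def pArbF (f p : ℝ) : ℝ :=
  if p > 1 / (1 - f) then 1 / (1 - f)
  else if p < 1 - f then 1 - f
  else p

lemma hi_id (f p : ℝ) (hf1 : f < 1) (hp : 0 < p) :
    p / 2 - Real.sqrt p / Real.sqrt (1 - f) + 1 / (2 * (1 - f))
      = (1 / 2) * (Real.sqrt p - 1 / Real.sqrt (1 - f)) ^ 2 := by
  have ht : (0:ℝ) < 1 - f := by linarith
  have hsq : Real.sqrt (1-f) ^ 2 = 1 - f := Real.sq_sqrt ht.le
  have hps : Real.sqrt p ^ 2 = p := Real.sq_sqrt hp.le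
  have h2 : (1 / Real.sqrt (1-f))^2 = 1/(1-f) := by rw [div_pow, one_pow, hsq]
  rw [sub_sq, hps, h2]
  field_simp

lemma lo_id (f p : ℝ) (hf1 : f < 1) (hp : 0 < p) :
    p / (2 * (1 - f)) - Real.sqrt p / Real.sqrt (1 - f) + 1 / 2
      = (1 / 2) * (Real.sqrt (p / (1 - f)) - 1) ^ 2 := by
  have ht : (0:ℝ) < 1 - f := by linarith
  have hsq : Real.sqrt (1-f) ^ 2 = 1 - f := Real.sq_sqrt ht.le
  have hps : Real.sqrt p ^ 2 = p := Real.sq_sqrt hp.le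
  have h3 : (Real.sqrt p / Real.sqrt (1-f))^2 = p/(1-f) := by rw [div_pow, hps, hsq]
  rw [Real.sqrt_div hp.le, sub_sq, h3, one_pow]
  field_simp

/-- (i) The maximal arbitrage profit is nonnegative (with explicit squares
on each branch), and (ii) after the maximal arbitrage trade no further
profitable arbitrage remains: `profit(pArb(p)) = 0`. -/
theorem profit_nonneg_and_no_further_arb (f : ℝ) (hf0 : 0 ≤ f) (hf1 : f < 1) :
    ∀ p : ℝ, 0 < p →
      0 ≤ profitF f p ∧
      (1 / (1 - f) ≤ p →
        profitF f p = (1 / 2) * (Real.sqrt p - 1 / Real.sqrt (1 - f)) ^ 2) ∧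
      (p ≤ 1 - f →
        profitF f p = (1 / 2) * (Real.sqrt (p / (1 - f)) - 1) ^ 2) ∧
      profitF f (pArbF f p) = 0 := by
  intro p hp
  have ht : (0:ℝ) < 1 - f := by linarith
  have hts : 0 < Real.sqrt (1 - f) := Real.sqrt_pos.mpr ht
  have htle : 1 - f ≤ 1 / (1 - f) := by
    rw [le_div_iff₀ ht]; nlinarith
  have hmid : ∀ q : ℝ, ¬ q > 1 / (1 - f) → ¬ q < 1 - f → profitF f q = 0 := by
    intro q h1 h2
    unfold profitF
    rw [if_neg h1, if_neg h2]
  refine ⟨?_, ?_, ?_, ?_⟩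
  · unfold profitF
    split_ifs with h1 h2
    · rw [hi_id f p hf1 hp]; positivity
    · rw [lo_id f p hf1 hp]; positivity
    · exact le_refl 0
  · intro h
    rcases eq_or_lt_of_le h with heq | hlt
    · have h0 : Real.sqrt p = 1 / Real.sqrt (1 - f) := by
        rw [← heq, one_div, one_div, Real.sqrt_inv]
      rw [hmid p (by rw [← heq]; exact lt_irrefl _) (by rw [← heq]; exact not_lt.mpr htle),
        h0]
      ring
    · unfold profitF
      rw [if_pos hlt]
      exact hi_id f p hf1 hp
  · intro h
    rcases eq_or_lt_of_le h with heq | hlt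
    · have h0 : Real.sqrt (p / (1 - f)) = 1 := by
        rw [heq, div_self ht.ne', Real.sqrt_one]
      rw [hmid p (not_lt.mpr (heq ▸ htle)) (by rw [heq]; exact lt_irrefl _), h0]
      ring
    · unfold profitF
      rw [if_neg (by push_neg; exact le_trans hlt.le htle), if_pos hlt]
      exact lo_id f p hf1 hp
  · unfold pArbF
    split_ifs with h1 h2
    · exact hmid _ (lt_irrefl _) (not_lt.mpr htle)
    · exact hmid _ (not_lt.mpr htle) (lt_irrefl _)
    · exact hmid p h1 h2
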